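/- arXiv:1905.11913 — 5 statements merged into one kernel-verified Lean document; each statement's English description precedes it below -/
import Mathlib

section
/- For integers k > ℓ ≥ 2 and any integer r with 2 ≤ r ≤ ℓ, the binomial coefficients satisfy (ℓ(ℓ-1))/(k(k-1)) · C(k,r) ≥ C(ℓ,r), with equality if and only if r = 2. -/
lemma key_id (n s : ℕ) :
    (n + 2) * (n + 1) * Nat.choose n s = (s + 2) * (s + 1) * Nat.choose (n + 2) (s + 2) := by
  have h1 := Nat.add_one_mul_choose_eq n s
  have h2 := Nat.add_one_mul_choose_eq (n + 1) (s + 1)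
  calc (n + 2) * (n + 1) * Nat.choose n s
      = (n + 2) * ((n + 1) * Nat.choose n s) := by ring
    _ = (n + 2) * (Nat.choose (n + 1) (s + 1) * (s + 1)) := by rw [h1]
    _ = (s + 1) * ((n + 1 + 1) * Nat.choose (n + 1) (s + 1)) := by ring
    _ = (s + 1) * (Nat.choose (n + 1 + 1) (s + 1 + 1) * (s + 1 + 1)) := by rw [h2]
    _ = (s + 2) * (s + 1) * Nat.choose (n + 2) (s + 2) := by ring_nf

lemma strict_choose {a b c : ℕ} (hba : b < a) (hcb : c + 1 ≤ b) :
    Nat.choose b (c + 1) < Nat.choose a (c + 1) := by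
  have h1 : Nat.choose b (c + 1) < Nat.choose (b + 1) (c + 1) := by
    rw [Nat.choose_succ_succ, Nat.succ_eq_add_one]
    have : 0 < Nat.choose b c := Nat.choose_pos (by omega)
    omega
  exact lt_of_lt_of_le h1 (Nat.choose_le_choose _ hba)

/-- For integers `k > ℓ ≥ 2` and `2 ≤ r ≤ ℓ`,
`(ℓ(ℓ-1))/(k(k-1)) · C(k,r) ≥ C(ℓ,r)`, with equality iff `r = 2`.
Stated with denominators cleared. -/
theorem stmt_0 (k l r : ℕ) (hl : 2 ≤ l) (hlk : l < k) (hr2 : 2 ≤ r) (hrl : r ≤ l) :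
    l * (l - 1) * Nat.choose k r ≥ k * (k - 1) * Nat.choose l r ∧
      (l * (l - 1) * Nat.choose k r = k * (k - 1) * Nat.choose l r ↔ r = 2) := by
  obtain ⟨a, rfl⟩ : ∃ a, k = a + 2 := ⟨k - 2, by omega⟩
  obtain ⟨b, rfl⟩ : ∃ b, l = b + 2 := ⟨l - 2, by omega⟩
  obtain ⟨c, rfl⟩ : ∃ c, r = c + 2 := ⟨r - 2, by omega⟩
  have hba : b < a := by omega
  have hcb : c ≤ b := by omega
  have e1 : b + 2 - 1 = b + 1 := rfl
  have e2 : a + 2 - 1 = a + 1 := rfl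
  rw [e1, e2]
  -- multiply both sides by (c+2)(c+1)
  have ha := key_id a c
  have hb := key_id b c
  have hmono : Nat.choose b c ≤ Nat.choose a c := Nat.choose_le_choose _ (le_of_lt hba)
  have pos : 0 < (c + 2) * (c + 1) := by positivity
  have main : (c + 2) * (c + 1) * ((b + 2) * (b + 1) * Nat.choose (a + 2) (c + 2))
      ≥ (c + 2) * (c + 1) * ((a + 2) * (a + 1) * Nat.choose (b + 2) (c + 2)) := by
    calc (c + 2) * (c + 1) * ((b + 2) * (b + 1) * Nat.choose (a + 2) (c + 2))
        = (b + 2) * (b + 1) * ((c + 2) * (c + 1) * Nat.choose (a + 2) (c + 2)) := by ring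
      _ = (b + 2) * (b + 1) * ((a + 2) * (a + 1) * Nat.choose a c) := by rw [← ha]
      _ ≥ (a + 2) * (a + 1) * ((b + 2) * (b + 1) * Nat.choose b c) := by
          have := Nat.mul_le_mul_left ((a+2)*(a+1)*(b+2)*(b+1)) hmono
          calc (b + 2) * (b + 1) * ((a + 2) * (a + 1) * Nat.choose a c)
              = (a+2)*(a+1)*(b+2)*(b+1) * Nat.choose a c := by ring
            _ ≥ (a+2)*(a+1)*(b+2)*(b+1) * Nat.choose b c := this
            _ = (a + 2) * (a + 1) * ((b + 2) * (b + 1) * Nat.choose b c) := by ring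
      _ = (a + 2) * (a + 1) * ((c + 2) * (c + 1) * Nat.choose (b + 2) (c + 2)) := by rw [← hb]
      _ = (c + 2) * (c + 1) * ((a + 2) * (a + 1) * Nat.choose (b + 2) (c + 2)) := by ring
  constructor
  · exact Nat.le_of_mul_le_mul_left main pos
  constructor
  · intro heq
    by_contra hne
    obtain ⟨c', rfl⟩ : ∃ c', c = c' + 1 := ⟨c - 1, by omega⟩
    have hstrict : Nat.choose b (c' + 1) < Nat.choose a (c' + 1) :=
      strict_choose hba (by omega)
    -- derive contradiction: from heq, multiplied versions equal
    have heq2 : (b + 2) * (b + 1) * ((a + 2) * (a + 1) * Nat.choose a (c' + 1))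
        = (a + 2) * (a + 1) * ((b + 2) * (b + 1) * Nat.choose b (c' + 1)) := by
      have := congrArg (fun x => (c' + 1 + 2) * (c' + 1 + 1) * x) heq
      calc (b + 2) * (b + 1) * ((a + 2) * (a + 1) * Nat.choose a (c' + 1))
          = (b + 2) * (b + 1) * ((c' + 1 + 2) * (c' + 1 + 1) * Nat.choose (a + 2) (c' + 1 + 2)) := by rw [ha]
        _ = (c' + 1 + 2) * (c' + 1 + 1) * ((b + 2) * (b + 1) * Nat.choose (a + 2) (c' + 1 + 2)) := by ring
        _ = (c' + 1 + 2) * (c' + 1 + 1) * ((a + 2) * (a + 1) * Nat.choose (b + 2) (c' + 1 + 2)) := this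
        _ = (a + 2) * (a + 1) * ((c' + 1 + 2) * (c' + 1 + 1) * Nat.choose (b + 2) (c' + 1 + 2)) := by ring
        _ = (a + 2) * (a + 1) * ((b + 2) * (b + 1) * Nat.choose b (c' + 1)) := by rw [hb]
    have hM : 0 < (b + 2) * (b + 1) * ((a + 2) * (a + 1)) := by positivity
    have h3 : (b + 2) * (b + 1) * ((a + 2) * (a + 1)) * Nat.choose a (c' + 1)
        = (b + 2) * (b + 1) * ((a + 2) * (a + 1)) * Nat.choose b (c' + 1) := by
      calc (b + 2) * (b + 1) * ((a + 2) * (a + 1)) * Nat.choose a (c' + 1)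
          = (b + 2) * (b + 1) * ((a + 2) * (a + 1) * Nat.choose a (c' + 1)) := by ring
        _ = (a + 2) * (a + 1) * ((b + 2) * (b + 1) * Nat.choose b (c' + 1)) := heq2
        _ = (b + 2) * (b + 1) * ((a + 2) * (a + 1)) * Nat.choose b (c' + 1) := by ring
    have := Nat.eq_of_mul_eq_mul_left hM h3
    omega
  · intro hc
    obtain rfl : c = 0 := by omega
    simp only [Nat.choose_zero_right, Nat.mul_one] at ha hb
    apply Nat.eq_of_mul_eq_mul_left (show 0 < 2 by norm_num)
    calc 2 * ((b + 2) * (b + 1) * Nat.choose (a + 2) (0 + 2))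
        = (b + 2) * (b + 1) * ((0 + 2) * (0 + 1) * Nat.choose (a + 2) (0 + 2)) := by ring
      _ = (b + 2) * (b + 1) * ((a + 2) * (a + 1)) := by rw [← ha]
      _ = (a + 2) * (a + 1) * ((b + 2) * (b + 1)) := by ring
      _ = (a + 2) * (a + 1) * ((0 + 2) * (0 + 1) * Nat.choose (b + 2) (0 + 2)) := by rw [← hb]
      _ = 2 * ((a + 2) * (a + 1) * Nat.choose (b + 2) (0 + 2)) := by ring
end

section
/- Let Y₁, ..., Yₙ be i.i.d. real random variables with mean 0, variance σ² > 0 and finite fourth moment, Sₙ = Y₁ + ... + Yₙ, a = E[Y³]/σ², and h(s) = s² − a·s − nσ². Then E[h(Sₙ)·Sₙ] = 0 and E[h(Sₙ)²] = nσ⁴Σ + 2n(n−1)σ⁴, where Σ = E[Y⁴]/σ⁴ − (E[Y³]/σ³)² − 1. -/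
open MeasureTheory ProbabilityTheory Finset


lemma aux_pow_int {Ω : Type*} [MeasureSpace Ω] [IsProbabilityMeasure (ℙ : Measure Ω)]
    {f : Ω → ℝ} (hm : Measurable f) (hf : MemLp f 4 ℙ) {k : ℕ} (hk : k ≤ 4) :
    Integrable (fun ω => f ω ^ k) ℙ := by
  have h4 : Integrable (fun ω => ‖f ω‖ ^ ((4 : ENNReal).toReal)) ℙ :=
    hf.integrable_norm_rpow (by norm_num) (by norm_num)
  have h4' : Integrable (fun ω => |f ω| ^ (4 : ℕ)) ℙ := by
    refine h4.congr ?_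
    filter_upwards with ω
    rw [Real.norm_eq_abs, ← Real.rpow_natCast]
    norm_num
  have hg : Integrable (fun ω => 1 + |f ω| ^ (4 : ℕ)) ℙ := (integrable_const 1).add h4'
  refine hg.mono' ((hm.pow_const k)).aestronglyMeasurable ?_
  filter_upwards with ω
  have h0 : |f ω| ^ k ≤ 1 + |f ω| ^ (4 : ℕ) := by
    rcases le_total (|f ω|) 1 with h1 | h1
    · have h2 : |f ω| ^ k ≤ 1 := pow_le_one₀ (abs_nonneg _) h1
      nlinarith [pow_nonneg (abs_nonneg (f ω)) 4]
    · have h2 : |f ω| ^ k ≤ |f ω| ^ (4 : ℕ) := pow_le_pow_right₀ h1 hk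
      linarith
  simpa [abs_pow] using h0

lemma aux_cross {Ω : Type*} [MeasureSpace Ω] [IsProbabilityMeasure (ℙ : Measure Ω)]
    {X Z : Ω → ℝ} (hXm : Measurable X) (hZm : Measurable Z)
    (hX4 : MemLp X 4 ℙ) (hZ4 : MemLp Z 4 ℙ) (hXZ : IndepFun X Z ℙ)
    (a b : ℕ) (ha : a ≤ 4) (hb : b ≤ 4) :
    Integrable (fun ω => X ω ^ a * Z ω ^ b) ℙ ∧
      ∫ ω, X ω ^ a * Z ω ^ b = (∫ ω, X ω ^ a) * ∫ ω, Z ω ^ b := by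
  have hind : IndepFun (fun ω => X ω ^ a) (fun ω => Z ω ^ b) ℙ :=
    hXZ.comp (measurable_id.pow_const a) (measurable_id.pow_const b)
  have hXi : Integrable (fun ω => X ω ^ a) ℙ := aux_pow_int hXm hX4 ha
  have hZi : Integrable (fun ω => Z ω ^ b) ℙ := aux_pow_int hZm hZ4 hb
  exact ⟨hind.integrable_mul hXi hZi, hind.integral_fun_mul_eq_mul_integral hXi.1 hZi.1⟩

lemma aux_sum_moments {Ω : Type*} [MeasureSpace Ω] [IsProbabilityMeasure (ℙ : Measure Ω)]
    {X Z : Ω → ℝ} (hXm : Measurable X) (hZm : Measurable Z)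
    (hX4 : MemLp X 4 ℙ) (hZ4 : MemLp Z 4 ℙ) (hXZ : IndepFun X Z ℙ) :
    ((∫ ω, (X ω + Z ω)) = (∫ ω, X ω ^ 1) + ∫ ω, Z ω ^ 1) ∧
    ((∫ ω, (X ω + Z ω) ^ 2) = (∫ ω, X ω ^ 2) + 2 * ((∫ ω, X ω ^ 1) * ∫ ω, Z ω ^ 1)
        + ∫ ω, Z ω ^ 2) ∧
    ((∫ ω, (X ω + Z ω) ^ 3) = (∫ ω, X ω ^ 3) + 3 * ((∫ ω, X ω ^ 2) * ∫ ω, Z ω ^ 1)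
        + 3 * ((∫ ω, X ω ^ 1) * ∫ ω, Z ω ^ 2) + ∫ ω, Z ω ^ 3) ∧
    ((∫ ω, (X ω + Z ω) ^ 4) = (∫ ω, X ω ^ 4) + 4 * ((∫ ω, X ω ^ 3) * ∫ ω, Z ω ^ 1)
        + 6 * ((∫ ω, X ω ^ 2) * ∫ ω, Z ω ^ 2) + 4 * ((∫ ω, X ω ^ 1) * ∫ ω, Z ω ^ 3)
        + ∫ ω, Z ω ^ 4) := by
  have hXi : ∀ a : ℕ, a ≤ 4 → Integrable (fun ω => X ω ^ a) ℙ :=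
    fun a ha => aux_pow_int hXm hX4 ha
  have hZi : ∀ b : ℕ, b ≤ 4 → Integrable (fun ω => Z ω ^ b) ℙ :=
    fun b hb => aux_pow_int hZm hZ4 hb
  have hC : ∀ a b : ℕ, a ≤ 4 → b ≤ 4 →
      Integrable (fun ω => X ω ^ a * Z ω ^ b) ℙ ∧
        ∫ ω, X ω ^ a * Z ω ^ b = (∫ ω, X ω ^ a) * ∫ ω, Z ω ^ b :=
    fun a b ha hb => aux_cross hXm hZm hX4 hZ4 hXZ a b ha hb
  refine ⟨?_, ?_, ?_, ?_⟩
  · rw [show (fun ω => X ω + Z ω) = (fun ω => X ω ^ 1 + Z ω ^ 1) from funext fun ω => by ring]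
    exact integral_add (hXi 1 (by norm_num)) (hZi 1 (by norm_num))
  · have e : (fun ω => (X ω + Z ω) ^ 2)
        = fun ω => X ω ^ 2 + (2 * (X ω ^ 1 * Z ω ^ 1) + Z ω ^ 2) := funext fun ω => by ring
    have h11 : Integrable (fun ω => 2 * (X ω ^ 1 * Z ω ^ 1)) ℙ :=
      (hC 1 1 (by norm_num) (by norm_num)).1.const_mul 2
    have hAB : Integrable (fun ω => 2 * (X ω ^ 1 * Z ω ^ 1) + Z ω ^ 2) ℙ :=
      h11.add (hZi 2 (by norm_num))
    rw [e, integral_add (hXi 2 (by norm_num)) hAB,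
      integral_add h11 (hZi 2 (by norm_num)),
      integral_const_mul, (hC 1 1 (by norm_num) (by norm_num)).2]
    ring
  · have e : (fun ω => (X ω + Z ω) ^ 3)
        = fun ω => X ω ^ 3 + (3 * (X ω ^ 2 * Z ω ^ 1) + (3 * (X ω ^ 1 * Z ω ^ 2) + Z ω ^ 3)) :=
      funext fun ω => by ring
    have h21 : Integrable (fun ω => 3 * (X ω ^ 2 * Z ω ^ 1)) ℙ :=
      (hC 2 1 (by norm_num) (by norm_num)).1.const_mul 3
    have h12 : Integrable (fun ω => 3 * (X ω ^ 1 * Z ω ^ 2)) ℙ :=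
      (hC 1 2 (by norm_num) (by norm_num)).1.const_mul 3
    have hB : Integrable (fun ω => 3 * (X ω ^ 1 * Z ω ^ 2) + Z ω ^ 3) ℙ :=
      h12.add (hZi 3 (by norm_num))
    have hAB : Integrable (fun ω => 3 * (X ω ^ 2 * Z ω ^ 1)
        + (3 * (X ω ^ 1 * Z ω ^ 2) + Z ω ^ 3)) ℙ := h21.add hB
    rw [e, integral_add (hXi 3 (by norm_num)) hAB,
      integral_add h21 hB, integral_add h12 (hZi 3 (by norm_num)),
      integral_const_mul, integral_const_mul,
      (hC 2 1 (by norm_num) (by norm_num)).2, (hC 1 2 (by norm_num) (by norm_num)).2]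
    ring
  · have e : (fun ω => (X ω + Z ω) ^ 4)
        = fun ω => X ω ^ 4 + (4 * (X ω ^ 3 * Z ω ^ 1) + (6 * (X ω ^ 2 * Z ω ^ 2)
            + (4 * (X ω ^ 1 * Z ω ^ 3) + Z ω ^ 4))) := funext fun ω => by ring
    have h31 : Integrable (fun ω => 4 * (X ω ^ 3 * Z ω ^ 1)) ℙ :=
      (hC 3 1 (by norm_num) (by norm_num)).1.const_mul 4
    have h22 : Integrable (fun ω => 6 * (X ω ^ 2 * Z ω ^ 2)) ℙ :=
      (hC 2 2 (by norm_num) (by norm_num)).1.const_mul 6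
    have h13 : Integrable (fun ω => 4 * (X ω ^ 1 * Z ω ^ 3)) ℙ :=
      (hC 1 3 (by norm_num) (by norm_num)).1.const_mul 4
    have hB2 : Integrable (fun ω => 4 * (X ω ^ 1 * Z ω ^ 3) + Z ω ^ 4) ℙ :=
      h13.add (hZi 4 (by norm_num))
    have hB1 : Integrable (fun ω => 6 * (X ω ^ 2 * Z ω ^ 2)
        + (4 * (X ω ^ 1 * Z ω ^ 3) + Z ω ^ 4)) ℙ := h22.add hB2
    have hAB : Integrable (fun ω => 4 * (X ω ^ 3 * Z ω ^ 1) + (6 * (X ω ^ 2 * Z ω ^ 2)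
        + (4 * (X ω ^ 1 * Z ω ^ 3) + Z ω ^ 4))) ℙ := h31.add hB1
    rw [e, integral_add (hXi 4 (by norm_num)) hAB,
      integral_add h31 hB1, integral_add h22 hB2,
      integral_add h13 (hZi 4 (by norm_num)),
      integral_const_mul, integral_const_mul, integral_const_mul,
      (hC 3 1 (by norm_num) (by norm_num)).2, (hC 2 2 (by norm_num) (by norm_num)).2,
      (hC 1 3 (by norm_num) (by norm_num)).2]
    ring
/-- For i.i.d. `Y₁,…,Yₙ` with mean 0, variance `σ² > 0` and finite fourth moment,
with `Sₙ = Y₁+⋯+Yₙ`, `a = E[Y³]/σ²` and `h(s) = s² − a·s − nσ²`, we have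
`E[h(Sₙ)·Sₙ] = 0` and `E[h(Sₙ)²] = nσ⁴Σ + 2n(n−1)σ⁴` where
`Σ = E[Y⁴]/σ⁴ − (E[Y³]/σ³)² − 1`. -/
theorem stmt_3 {Ω : Type*} [MeasureSpace Ω] [IsProbabilityMeasure (ℙ : Measure Ω)]
    (n : ℕ) (hn : 1 ≤ n) (Y : Fin n → Ω → ℝ)
    (hmeas : ∀ i, Measurable (Y i))
    (hindep : iIndepFun Y ℙ)
    (hident : ∀ i j, IdentDistrib (Y i) (Y j) ℙ ℙ)
    (σ : ℝ) (hσ : 0 < σ) (i₀ : Fin n)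
    (hL4 : MemLp (Y i₀) 4 ℙ)
    (hmean : ∫ ω, Y i₀ ω = 0) (hvar : ∫ ω, (Y i₀ ω) ^ 2 = σ ^ 2)
    (a Sg : ℝ) (ha : a = (∫ ω, (Y i₀ ω) ^ 3) / σ ^ 2)
    (hSg : Sg = (∫ ω, (Y i₀ ω) ^ 4) / σ ^ 4 - ((∫ ω, (Y i₀ ω) ^ 3) / σ ^ 3) ^ 2 - 1)
    (h : ℝ → ℝ) (hh : ∀ s, h s = s ^ 2 - a * s - n * σ ^ 2)
    (S : Ω → ℝ) (hS : ∀ ω, S ω = ∑ i, Y i ω) :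
    (∫ ω, h (S ω) * S ω = 0) ∧
      ∫ ω, (h (S ω)) ^ 2 = n * σ ^ 4 * Sg + 2 * n * (n - 1) * σ ^ 4 := by
  have hσ0 : σ ≠ 0 := ne_of_gt hσ
  set m3 := ∫ ω, (Y i₀ ω) ^ 3 with hm3def
  set m4 := ∫ ω, (Y i₀ ω) ^ 4 with hm4def
  have hY4 : ∀ i, MemLp (Y i) 4 ℙ := fun i => (hident i₀ i).memLp_snd hL4
  have hmom : ∀ (i : Fin n) (k : ℕ), (∫ ω, Y i ω ^ k) = ∫ ω, Y i₀ ω ^ k := fun i k =>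
    ((hident i i₀).comp (measurable_id.pow_const k)).integral_eq
  have hmean' : ∀ i, (∫ ω, Y i ω ^ 1) = 0 := by
    intro i
    rw [hmom i 1]
    simpa using hmean
  have hvar' : ∀ i, (∫ ω, Y i ω ^ 2) = σ ^ 2 := fun i => (hmom i 2).trans hvar
  have hm3' : ∀ i, (∫ ω, Y i ω ^ 3) = m3 := fun i => hmom i 3
  have hm4' : ∀ i, (∫ ω, Y i ω ^ 4) = m4 := fun i => hmom i 4
  have key : ∀ s : Finset (Fin n),
      ((∫ ω, (∑ i ∈ s, Y i ω) ^ 1) = 0) ∧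
      ((∫ ω, (∑ i ∈ s, Y i ω) ^ 2) = s.card * σ ^ 2) ∧
      ((∫ ω, (∑ i ∈ s, Y i ω) ^ 3) = s.card * m3) ∧
      ((∫ ω, (∑ i ∈ s, Y i ω) ^ 4)
        = s.card * m4 + 3 * s.card * (s.card - 1) * σ ^ 4) := by
    intro s
    induction s using Finset.induction_on with
    | empty => simp
    | @insert j s hj ih =>
      have hTmeas : Measurable (fun ω => ∑ i ∈ s, Y i ω) :=
        Finset.measurable_sum s fun i _ => hmeas i
      have hT4 : MemLp (fun ω => ∑ i ∈ s, Y i ω) 4 ℙ :=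
        memLp_finset_sum s fun i _ => hY4 i
      have hXZ : IndepFun (Y j) (fun ω => ∑ i ∈ s, Y i ω) ℙ := by
        have h0 := (hindep.indepFun_finsetSum_of_notMem hmeas hj).symm
        have : (∑ i ∈ s, Y i) = fun ω => ∑ i ∈ s, Y i ω := by
          funext ω; simp [Finset.sum_apply]
        rwa [this] at h0
      obtain ⟨e1, e2, e3, e4⟩ := aux_sum_moments (hmeas j) hTmeas (hY4 j) hT4 hXZ
      obtain ⟨i1, i2, i3, i4⟩ := ih
      have hc : ((insert j s).card : ℝ) = (s.card : ℝ) + 1 := by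
        rw [Finset.card_insert_of_notMem hj]; push_cast; ring
      refine ⟨?_, ?_, ?_, ?_⟩
      · simp only [Finset.sum_insert hj, pow_one]
        rw [e1, hmean' j, i1]
        norm_num
      · simp only [Finset.sum_insert hj]
        rw [e2, hvar' j, hmean' j, i1, i2, hc]
        ring
      · simp only [Finset.sum_insert hj]
        rw [e3, hm3' j, hvar' j, hmean' j, i1, i2, i3, hc]
        ring
      · simp only [Finset.sum_insert hj]
        rw [e4, hm4' j, hm3' j, hvar' j, hmean' j, i1, i2, i3, i4, hc]
        ring
  obtain ⟨k1, k2, k3, k4⟩ := key Finset.univ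
  simp only [Finset.card_univ, Fintype.card_fin] at k1 k2 k3 k4
  have hSmeas : Measurable (fun ω => ∑ i, Y i ω) :=
    Finset.measurable_sum Finset.univ fun i _ => hmeas i
  have hS4 : MemLp (fun ω => ∑ i, Y i ω) 4 ℙ :=
    memLp_finset_sum Finset.univ fun i _ => hY4 i
  have hSk : ∀ k : ℕ, k ≤ 4 → Integrable (fun ω => (∑ i, Y i ω) ^ k) ℙ :=
    fun k hk => aux_pow_int hSmeas hS4 hk
  constructor
  · have hfun : (fun ω => h (S ω) * S ω)
        = fun ω => (∑ i, Y i ω) ^ 3 + (-a) * (∑ i, Y i ω) ^ 2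
            + (-((n : ℝ) * σ ^ 2)) * (∑ i, Y i ω) ^ 1 := by
      funext ω; rw [hh, hS]; ring
    have hI2 : Integrable (fun ω => (-a) * (∑ i, Y i ω) ^ 2) ℙ :=
      (hSk 2 (by norm_num)).const_mul _
    have hI1 : Integrable (fun ω => (-((n : ℝ) * σ ^ 2)) * (∑ i, Y i ω) ^ 1) ℙ :=
      (hSk 1 (by norm_num)).const_mul _
    have hI32 : Integrable (fun ω => (∑ i, Y i ω) ^ 3 + (-a) * (∑ i, Y i ω) ^ 2) ℙ :=
      (hSk 3 (by norm_num)).add hI2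
    rw [hfun, integral_add hI32 hI1, integral_add (hSk 3 (by norm_num)) hI2,
      integral_const_mul, integral_const_mul, k1, k2, k3, ha]
    field_simp
    ring
  · have hfun : (fun ω => (h (S ω)) ^ 2)
        = fun ω => (∑ i, Y i ω) ^ 4 + (-(2 * a)) * (∑ i, Y i ω) ^ 3
            + (a ^ 2 - 2 * ((n : ℝ) * σ ^ 2)) * (∑ i, Y i ω) ^ 2
            + (2 * a * ((n : ℝ) * σ ^ 2)) * (∑ i, Y i ω) ^ 1
            + ((n : ℝ) * σ ^ 2) ^ 2 := by
      funext ω; rw [hh, hS]; ring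
    have hJ3 : Integrable (fun ω => (-(2 * a)) * (∑ i, Y i ω) ^ 3) ℙ :=
      (hSk 3 (by norm_num)).const_mul _
    have hJ2 : Integrable (fun ω => (a ^ 2 - 2 * ((n : ℝ) * σ ^ 2)) * (∑ i, Y i ω) ^ 2) ℙ :=
      (hSk 2 (by norm_num)).const_mul _
    have hJ1 : Integrable (fun ω => (2 * a * ((n : ℝ) * σ ^ 2)) * (∑ i, Y i ω) ^ 1) ℙ :=
      (hSk 1 (by norm_num)).const_mul _
    have hA1 : Integrable (fun ω => (∑ i, Y i ω) ^ 4 + (-(2 * a)) * (∑ i, Y i ω) ^ 3) ℙ :=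
      (hSk 4 (by norm_num)).add hJ3
    have hA2 : Integrable (fun ω => (∑ i, Y i ω) ^ 4 + (-(2 * a)) * (∑ i, Y i ω) ^ 3
        + (a ^ 2 - 2 * ((n : ℝ) * σ ^ 2)) * (∑ i, Y i ω) ^ 2) ℙ := hA1.add hJ2
    have hA3 : Integrable (fun ω => (∑ i, Y i ω) ^ 4 + (-(2 * a)) * (∑ i, Y i ω) ^ 3
        + (a ^ 2 - 2 * ((n : ℝ) * σ ^ 2)) * (∑ i, Y i ω) ^ 2
        + (2 * a * ((n : ℝ) * σ ^ 2)) * (∑ i, Y i ω) ^ 1) ℙ := hA2.add hJ1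
    rw [hfun, integral_add hA3 (integrable_const _), integral_add hA2 hJ1,
      integral_add hA1 hJ2, integral_add (hSk 4 (by norm_num)) hJ3,
      integral_const_mul, integral_const_mul, integral_const_mul,
      k1, k2, k3, k4, integral_const]
    simp only [probReal_univ, smul_eq_mul, one_mul]
    rw [ha, hSg]
    field_simp
    ring
end

section
/- Let Y₁, Y₂ be i.i.d. real random variables with E[Y] = 0, and let h be a square-integrable function with E[h(Y₁+Y₂)] = 0. Define g(y) = E[h(y + Y₂)] and U(y₁,y₂) = h(y₁+y₂) − g(y₁) − g(y₂). Then E[g(Y₁)] = 0 and E[h(Y₁+Y₂)²] = 2·E[g(Y₁)²] + E[U(Y₁,Y₂)²]. -/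
open MeasureTheory ProbabilityTheory

-- auxiliary: (∫ f)² ≤ ∫ f² on a probability measure, for f ∈ L²
lemma sq_integral_le {α : Type*} [MeasurableSpace α] {μ : Measure α}
    [IsProbabilityMeasure μ] {f : α → ℝ} (hf : MemLp f 2 μ) :
    (∫ x, f x ∂μ) ^ 2 ≤ ∫ x, f x ^ 2 ∂μ := by
  have h := variance_nonneg f μ
  rw [variance_eq_sub hf] at h
  have : μ[f ^ 2] = ∫ x, f x ^ 2 ∂μ := by rfl
  rw [this] at h
  linarith

/-- For i.i.d. `Y₁, Y₂` with mean `0` and `h` square-integrable with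
`E[h(Y₁+Y₂)] = 0`, setting `g(y) = E[h(y+Y₂)]` and
`U(y₁,y₂) = h(y₁+y₂) − g(y₁) − g(y₂)`, one has `E[g(Y₁)] = 0` and
`E[h(Y₁+Y₂)²] = 2 E[g(Y₁)²] + E[U(Y₁,Y₂)²]`. -/
theorem stmt_9 {Ω : Type*} [MeasureSpace Ω] [IsProbabilityMeasure (ℙ : Measure Ω)]
    (Y₁ Y₂ : Ω → ℝ) (hm₁ : Measurable Y₁) (hm₂ : Measurable Y₂)
    (hindep : IndepFun Y₁ Y₂ ℙ) (hident : IdentDistrib Y₁ Y₂ ℙ ℙ)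
    (hmean : ∫ ω, Y₁ ω = 0)
    (h : ℝ → ℝ) (hhm : Measurable h)
    (hL2 : MemLp (fun ω => h (Y₁ ω + Y₂ ω)) 2 ℙ)
    (hzero : ∫ ω, h (Y₁ ω + Y₂ ω) = 0)
    (g : ℝ → ℝ) (hg : ∀ y, g y = ∫ ω, h (y + Y₂ ω))
    (Uf : ℝ → ℝ → ℝ) (hUf : ∀ y₁ y₂, Uf y₁ y₂ = h (y₁ + y₂) - g y₁ - g y₂) :
    (∫ ω, g (Y₁ ω) = 0) ∧
      ∫ ω, (h (Y₁ ω + Y₂ ω)) ^ 2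
        = 2 * (∫ ω, (g (Y₁ ω)) ^ 2) + ∫ ω, (Uf (Y₁ ω) (Y₂ ω)) ^ 2 := by
  set μ : Measure ℝ := Measure.map Y₁ ℙ with hμdef
  have hμ2 : Measure.map Y₂ ℙ = μ := hident.map_eq.symm
  have hμprob : IsProbabilityMeasure μ := Measure.isProbabilityMeasure_map hm₁.aemeasurable
  set π : Measure (ℝ × ℝ) := μ.prod μ with hπdef
  have hπprob : IsProbabilityMeasure π := by infer_instance
  -- joint law is the product
  have hmap : Measure.map (fun ω => (Y₁ ω, Y₂ ω)) ℙ = π := by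
    have := (indepFun_iff_map_prod_eq_prod_map_map hm₁.aemeasurable hm₂.aemeasurable).mp hindep
    rw [this, hμ2]
  set H : ℝ × ℝ → ℝ := fun p => h (p.1 + p.2) with hHdef
  have hHm : Measurable H := hhm.comp (measurable_fst.add measurable_snd)
  have hpairm : Measurable fun ω => (Y₁ ω, Y₂ ω) := hm₁.prodMk hm₂
  -- transfer of integrals over ℙ to π
  have key : ∀ f : ℝ × ℝ → ℝ, Measurable f →
      ∫ ω, f (Y₁ ω, Y₂ ω) = ∫ p, f p ∂π := by
    intro f hf
    rw [← hmap, integral_map hpairm.aemeasurable]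
    exact hf.aestronglyMeasurable
  -- H is in L² over π
  have hHL2 : MemLp H 2 π := by
    rw [← hmap]
    exact (memLp_map_measure_iff hHm.aestronglyMeasurable hpairm.aemeasurable).2 hL2
  have hHint : Integrable H π := hHL2.integrable one_le_two
  have hH2int : Integrable (fun p => H p ^ 2) π := hHL2.integrable_sq
  -- g as an integral over μ
  have hg' : ∀ y, g y = ∫ z, h (y + z) ∂μ := by
    intro y
    rw [hg y, ← hμ2, integral_map hm₂.aemeasurable]
    exact (hhm.comp (measurable_const.add measurable_id)).aestronglyMeasurable
  have hgm : Measurable g := by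
    have : StronglyMeasurable fun y => ∫ z, H (y, z) ∂μ :=
      hHm.stronglyMeasurable.integral_prod_right'
    have hgeq : g = fun y => ∫ z, H (y, z) ∂μ := funext fun y => hg' y
    rw [hgeq]; exact this.measurable
  -- g ∈ L²(μ)
  have hgL2 : MemLp g 2 μ := by
    rw [memLp_two_iff_integrable_sq hgm.aestronglyMeasurable]
    have hbd : Integrable (fun y => ∫ z, H (y, z) ^ 2 ∂μ) μ := by
      exact (hH2int : Integrable (fun p => H p ^ 2) π).integral_prod_left
    refine Integrable.mono' hbd (hgm.pow_const 2).aestronglyMeasurable ?_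
    filter_upwards [hHint.prod_right_ae, hH2int.prod_right_ae] with y h1 h2
    have hmem : MemLp (fun z => H (y, z)) 2 μ := by
      rw [memLp_two_iff_integrable_sq]
      · exact h2
      · exact (hHm.comp measurable_prodMk_left).aestronglyMeasurable
    have := sq_integral_le hmem
    have hgy : g y = ∫ z, H (y, z) ∂μ := hg' y
    rw [Real.norm_eq_abs, abs_of_nonneg (sq_nonneg _), hgy]
    exact this
  have hgint : Integrable g μ := hgL2.integrable one_le_two
  have hg2int : Integrable (fun y => g y ^ 2) μ := hgL2.integrable_sq
  -- mean of g is zero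
  have hHmean : ∫ p, H p ∂π = 0 := by rw [← key H hHm]; exact hzero
  have hgmean : ∫ y, g y ∂μ = 0 := by
    have : ∫ y, g y ∂μ = ∫ y, ∫ z, H (y, z) ∂μ ∂μ :=
      integral_congr_ae (Filter.Eventually.of_forall fun y => hg' y)
    rw [this, ← integral_prod H hHint]
    exact hHmean
  -- marginals: fst and snd measure preserving
  have mpfst : MeasurePreserving (Prod.fst : ℝ × ℝ → ℝ) π μ :=
    ⟨measurable_fst, by simp [hπdef]⟩
  have mpsnd : MeasurePreserving (Prod.snd : ℝ × ℝ → ℝ) π μ :=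
    ⟨measurable_snd, by simp [hπdef]⟩
  have hG1 : MemLp (fun p : ℝ × ℝ => g p.1) 2 π := hgL2.comp_measurePreserving mpfst
  have hG2 : MemLp (fun p : ℝ × ℝ => g p.2) 2 π := hgL2.comp_measurePreserving mpsnd
  set U : ℝ × ℝ → ℝ := fun p => H p - g p.1 - g p.2 with hUdef
  have hUm : Measurable U := (hHm.sub (hgm.comp measurable_fst)).sub (hgm.comp measurable_snd)
  have hUL2 : MemLp U 2 π := (hHL2.sub hG1).sub hG2
  -- products of L² functions are integrable
  have mulint : ∀ (a b : ℝ × ℝ → ℝ), MemLp a 2 π → MemLp b 2 π →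
      Integrable (fun p => a p * b p) π := by
    intro a b ha hb
    have : MemLp (b • a) 1 π := MemLp.smul ha hb
    have h2 : (fun p => a p * b p) = b • a := by
      funext p; simp [mul_comm]
    rw [h2, ← memLp_one_iff_integrable]
    exact this
  have hG1U : Integrable (fun p => g p.1 * U p) π := mulint _ _ hG1 hUL2
  have hG2U : Integrable (fun p => g p.2 * U p) π := mulint _ _ hG2 hUL2
  have hG1G2 : Integrable (fun p => g p.1 * g p.2) π := mulint _ _ hG1 hG2
  have hG1sq : Integrable (fun p => g p.1 ^ 2) π := hG1.integrable_sq
  have hG2sq : Integrable (fun p => g p.2 ^ 2) π := hG2.integrable_sq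
  have hUsq : Integrable (fun p => U p ^ 2) π := hUL2.integrable_sq
  -- marginal squares
  have hA1 : ∫ p, g p.1 ^ 2 ∂π = ∫ y, g y ^ 2 ∂μ := by
    rw [← mpfst.map_eq, integral_map measurable_fst.aemeasurable
      (hgm.pow_const 2).aestronglyMeasurable]
  have hA2 : ∫ p, g p.2 ^ 2 ∂π = ∫ y, g y ^ 2 ∂μ := by
    rw [← mpsnd.map_eq, integral_map measurable_snd.aemeasurable
      (hgm.pow_const 2).aestronglyMeasurable]
  -- cross term 1
  have hc1 : ∫ p, g p.1 * g p.2 ∂π = 0 := by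
    rw [hπdef, integral_prod_mul g g, hgmean, mul_zero]
  -- cross term 2 : E[G₁ U] = 0
  have hc2 : ∫ p, g p.1 * U p ∂π = 0 := by
    rw [hπdef, integral_prod _ hG1U]
    have : ∀ᵐ y ∂μ, ∫ z, g (y, z).1 * U (y, z) ∂μ = 0 := by
      filter_upwards [hHint.prod_right_ae] with y h1
      have hint1 : Integrable (fun z => H (y, z)) μ := h1
      have heq : (fun z => g (y, z).1 * U (y, z))
          = fun z => g y * (H (y, z) - g y - g z) := by
        funext z; simp [hUdef]
      rw [heq, integral_const_mul]
      have i1 : Integrable (fun z => H (y, z) - g y) μ := hint1.sub (integrable_const _)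
      have hz : ∫ z, (H (y, z) - g y - g z) ∂μ = 0 := by
        rw [integral_sub i1 hgint,
          integral_sub hint1 (integrable_const _), integral_const, ← hg' y, hgmean]
        simp
      rw [hz, mul_zero]
    rw [integral_congr_ae this, integral_zero]
  -- cross term 3 : E[G₂ U] = 0
  have hc3 : ∫ p, g p.2 * U p ∂π = 0 := by
    rw [hπdef, integral_prod_symm _ hG2U]
    have : ∀ᵐ z ∂μ, ∫ y, g (y, z).2 * U (y, z) ∂μ = 0 := by
      filter_upwards [hHint.prod_left_ae] with z h1
      have hint1 : Integrable (fun y => H (y, z)) μ := h1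
      have heq : (fun y => g (y, z).2 * U (y, z))
          = fun y => g z * (H (y, z) - g y - g z) := by
        funext y; simp [hUdef]
      rw [heq, integral_const_mul]
      have hHz : ∫ y, H (y, z) ∂μ = g z := by
        rw [hg' z]
        apply integral_congr_ae
        filter_upwards with y
        simp [hHdef, add_comm]
      have i1 : Integrable (fun y => H (y, z) - g y) μ := hint1.sub hgint
      have hz : ∫ y, (H (y, z) - g y - g z) ∂μ = 0 := by
        rw [integral_sub i1 (integrable_const _),
          integral_sub hint1 hgint, integral_const, hgmean, hHz]
        simp
      rw [hz, mul_zero]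
    rw [integral_congr_ae this, integral_zero]
  -- main expansion over π
  have hexp : ∫ p, H p ^ 2 ∂π
      = 2 * (∫ y, g y ^ 2 ∂μ) + ∫ p, U p ^ 2 ∂π := by
    have hpt : (fun p => H p ^ 2)
        = fun p => g p.1 ^ 2 + g p.2 ^ 2 + U p ^ 2
            + (2 * (g p.1 * g p.2) + 2 * (g p.1 * U p) + 2 * (g p.2 * U p)) := by
      funext p; simp only [hUdef]; ring
    calc ∫ p, H p ^ 2 ∂π
        = ∫ p, (g p.1 ^ 2 + g p.2 ^ 2 + U p ^ 2
            + (2 * (g p.1 * g p.2) + 2 * (g p.1 * U p) + 2 * (g p.2 * U p))) ∂π := by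
          rw [← hpt]
      _ = ((∫ p, g p.1 ^ 2 ∂π) + (∫ p, g p.2 ^ 2 ∂π) + (∫ p, U p ^ 2 ∂π))
            + ((2 * ∫ p, g p.1 * g p.2 ∂π) + (2 * ∫ p, g p.1 * U p ∂π)
              + (2 * ∫ p, g p.2 * U p ∂π)) := by
          have i1 : Integrable (fun p => g p.1 ^ 2 + g p.2 ^ 2) π := hG1sq.add hG2sq
          have i2 : Integrable (fun p => g p.1 ^ 2 + g p.2 ^ 2 + U p ^ 2) π := i1.add hUsq
          have i3 : Integrable (fun p => 2 * (g p.1 * g p.2)) π := hG1G2.const_mul 2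
          have i4 : Integrable (fun p => 2 * (g p.1 * U p)) π := hG1U.const_mul 2
          have i5 : Integrable (fun p => 2 * (g p.2 * U p)) π := hG2U.const_mul 2
          have i6 : Integrable (fun p => 2 * (g p.1 * g p.2) + 2 * (g p.1 * U p)) π := i3.add i4
          have i7 : Integrable (fun p => 2 * (g p.1 * g p.2) + 2 * (g p.1 * U p)
              + 2 * (g p.2 * U p)) π := i6.add i5
          rw [integral_add i2 i7, integral_add i1 hUsq, integral_add hG1sq hG2sq,
            integral_add i6 i5, integral_add i3 i4,
            integral_const_mul, integral_const_mul, integral_const_mul]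
      _ = 2 * (∫ y, g y ^ 2 ∂μ) + ∫ p, U p ^ 2 ∂π := by
          rw [hA1, hA2, hc1, hc2, hc3]; ring
  -- transfer back to ℙ
  have t1 : ∫ ω, g (Y₁ ω) = 0 := by
    rw [show (∫ ω, g (Y₁ ω)) = ∫ y, g y ∂μ from
      (integral_map hm₁.aemeasurable hgm.aestronglyMeasurable).symm, hgmean]
  refine ⟨t1, ?_⟩
  have t2 : ∫ ω, (h (Y₁ ω + Y₂ ω)) ^ 2 = ∫ p, H p ^ 2 ∂π :=
    key (fun p => H p ^ 2) (hHm.pow_const 2)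
  have t3 : ∫ ω, (g (Y₁ ω)) ^ 2 = ∫ y, g y ^ 2 ∂μ :=
    (integral_map hm₁.aemeasurable (hgm.pow_const 2).aestronglyMeasurable).symm
  have t4 : ∫ ω, (Uf (Y₁ ω) (Y₂ ω)) ^ 2 = ∫ p, U p ^ 2 ∂π := by
    have : ∀ ω, (Uf (Y₁ ω) (Y₂ ω)) ^ 2 = (fun p : ℝ × ℝ => U p ^ 2) (Y₁ ω, Y₂ ω) := by
      intro ω; simp [hUf, hUdef, hHdef]
    calc ∫ ω, (Uf (Y₁ ω) (Y₂ ω)) ^ 2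
        = ∫ ω, (fun p : ℝ × ℝ => U p ^ 2) (Y₁ ω, Y₂ ω) := by
          exact integral_congr_ae (Filter.Eventually.of_forall this)
      _ = ∫ p, U p ^ 2 ∂π := key _ (hUm.pow_const 2)
  rw [t2, t3, t4, hexp]
end

section
/- For ρ ∈ (−1,1), δ > 0, and x, y ∈ ℝ², the χ²-divergence between the bivariate Gaussian density with mean x and covariance δ²R_ρ and the bivariate Gaussian density with mean y and covariance δ²I₂ equals (1/(1−ρ²))·exp((x−y)ᵀ R_ρ (x−y) / ((1−ρ²)δ²)) − 1, where R_ρ is the 2×2 matrix with 1 on the diagonal and ρ off-diagonal. -/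
open MeasureTheory Matrix Real

/-- Density of a bivariate Gaussian with mean `μ` and covariance `S` on `ℝ²`. -/
noncomputable def gaussDensity2 (μ : Fin 2 → ℝ) (S : Matrix (Fin 2) (Fin 2) ℝ)
    (x : Fin 2 → ℝ) : ℝ :=
  (1 / (2 * π * Real.sqrt S.det)) *
    Real.exp (-(dotProduct (x - μ) (S⁻¹.mulVec (x - μ))) / 2)

lemma gauss1_key {c : ℝ} (hc : 0 < c) (d e b : ℝ) :
    -c*b^2 + d*b + e = -(c*(b - d/(2*c))^2) + (d^2/(4*c) + e) := by
  field_simp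
  ring

lemma gauss1_integrable {c : ℝ} (hc : 0 < c) (d e : ℝ) :
    Integrable (fun b : ℝ => Real.exp (-c*b^2 + d*b + e)) := by
  have h : (fun b : ℝ => Real.exp (-c*b^2 + d*b + e))
      = fun b : ℝ => Real.exp (-(c*(b - d/(2*c))^2)) * Real.exp (d^2/(4*c) + e) := by
    funext b
    rw [← Real.exp_add, gauss1_key hc]
  rw [h]
  have h1 : Integrable (fun t : ℝ => Real.exp (-(c*t^2))) := by
    simpa [neg_mul] using integrable_exp_neg_mul_sq hc
  exact (h1.comp_sub_right (d/(2*c))).mul_const _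

lemma gauss1 {c : ℝ} (hc : 0 < c) (d e : ℝ) :
    (∫ b : ℝ, Real.exp (-c*b^2 + d*b + e))
      = Real.sqrt (π/c) * Real.exp (d^2/(4*c) + e) := by
  have h : (fun b : ℝ => Real.exp (-c*b^2 + d*b + e))
      = fun b : ℝ => Real.exp (-(c*((b - d/(2*c)))^2)) * Real.exp (d^2/(4*c) + e) := by
    funext b
    rw [← Real.exp_add, gauss1_key hc]
  rw [h, integral_mul_const]
  congr 1
  have h2 := integral_sub_right_eq_self (μ := volume) (fun t : ℝ => Real.exp (-(c*t^2))) (d/(2*c))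
  rw [h2]
  simpa [neg_mul] using integral_gaussian c

lemma sq_div_exp_aux (k1 k2 A B : ℝ) (hk2 : k2 ≠ 0) :
    (k1 * Real.exp A)^2 / (k2 * Real.exp B) = (k1^2/k2) * Real.exp (2*A - B) := by
  have h2 : (Real.exp A)^2 = Real.exp (2*A) := by
    rw [two_mul, Real.exp_add, sq]
  rw [mul_pow, h2, Real.exp_sub]
  field_simp [Real.exp_ne_zero]

set_option maxHeartbeats 1000000 in
/-- The generic two–dimensional Gaussian integral in the shape we need. -/
lemma gauss2 {c C : ℝ} (hc : 0 < c) (hC : 0 < C) (p q v w : ℝ)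
    (hc' : 0 < c - p^2/(4*c)) :
    (∫ z : ℝ × ℝ, C * Real.exp (-c*z.2^2 + (p*z.1+q)*z.2 + (-c*z.1^2 + v*z.1 + w)))
      = C * Real.sqrt (π/c) * Real.sqrt (π/(c - p^2/(4*c))) *
          Real.exp ((p*q/(2*c)+v)^2/(4*(c - p^2/(4*c))) + (q^2/(4*c)+w)) := by
  have hexp : ∀ a : ℝ, (p*a+q)^2/(4*c) + (-c*a^2+v*a+w)
      = -(c - p^2/(4*c))*a^2 + (p*q/(2*c)+v)*a + (q^2/(4*c)+w) := by
    intro a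
    field_simp
    ring
  have hcont : Continuous fun z : ℝ × ℝ =>
      C * Real.exp (-c*z.2^2 + (p*z.1+q)*z.2 + (-c*z.1^2 + v*z.1 + w)) := by
    fun_prop
  have hinner : ∀ a : ℝ,
      (∫ b : ℝ, C * Real.exp (-c*b^2 + (p*a+q)*b + (-c*a^2 + v*a + w)))
        = (C * Real.sqrt (π/c)) *
            Real.exp (-(c - p^2/(4*c))*a^2 + (p*q/(2*c)+v)*a + (q^2/(4*c)+w)) := by
    intro a
    rw [integral_const_mul, gauss1 hc, ← hexp a]
    ring
  have hnorm : ∀ a b : ℝ,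
      ‖C * Real.exp (-c*b^2 + (p*a+q)*b + (-c*a^2 + v*a + w))‖
        = C * Real.exp (-c*b^2 + (p*a+q)*b + (-c*a^2 + v*a + w)) := by
    intro a b
    rw [Real.norm_eq_abs, abs_of_pos (by positivity)]
  have hint : Integrable (fun z : ℝ × ℝ =>
      C * Real.exp (-c*z.2^2 + (p*z.1+q)*z.2 + (-c*z.1^2 + v*z.1 + w)))
      (volume.prod volume) := by
    rw [integrable_prod_iff hcont.aestronglyMeasurable]
    constructor
    · refine Filter.Eventually.of_forall fun a => ?_
      exact (gauss1_integrable hc (p*a+q) (-c*a^2 + v*a + w)).const_mul C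
    · have : (fun a : ℝ => ∫ b : ℝ,
          ‖C * Real.exp (-c*b^2 + (p*a+q)*b + (-c*a^2 + v*a + w))‖)
          = fun a : ℝ => (C * Real.sqrt (π/c)) *
              Real.exp (-(c - p^2/(4*c))*a^2 + (p*q/(2*c)+v)*a + (q^2/(4*c)+w)) := by
        funext a
        simp_rw [hnorm a]
        exact hinner a
      rw [this]
      exact (gauss1_integrable hc' _ _).const_mul _
  rw [Measure.volume_eq_prod, integral_prod _ hint]
  simp_rw [hinner]
  rw [integral_const_mul, gauss1 hc']
  ring

lemma dot_aux (t ρ : ℝ) (v : Fin 2 → ℝ) :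
    dotProduct v ((t • !![(1:ℝ), -ρ; -ρ, 1]).mulVec v)
      = t * (v 0 * (v 0 - ρ * v 1) + v 1 * (-(ρ * v 0) + v 1)) := by
  simp [dotProduct, Matrix.mulVec, Fin.sum_univ_two]
  ring

lemma dot_aux3 (ρ : ℝ) (v : Fin 2 → ℝ) :
    dotProduct v ((!![(1:ℝ), ρ; ρ, 1]).mulVec v)
      = v 0^2 + 2*ρ*(v 0)*(v 1) + v 1^2 := by
  simp [dotProduct, Matrix.mulVec, Fin.sum_univ_two]
  ring

lemma dot_aux2 (t : ℝ) (v : Fin 2 → ℝ) :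
    dotProduct v ((t • (1 : Matrix (Fin 2) (Fin 2) ℝ)).mulVec v)
      = t * (v 0^2 + v 1^2) := by
  simp [dotProduct, Matrix.mulVec, Fin.sum_univ_two, Matrix.one_apply]
  ring

set_option maxHeartbeats 2000000 in
/-- The `χ²`-divergence between bivariate Gaussians `γ_{x; δ²R_ρ}` and
`γ_{y; δ²I₂}` equals
`(1/(1−ρ²))·exp((x−y)ᵀ R_ρ (x−y) / ((1−ρ²)δ²)) − 1`. -/
theorem stmt_12 (ρ : ℝ) (hρ : ρ ∈ Set.Ioo (-1 : ℝ) 1) (δ : ℝ) (hδ : 0 < δ)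
    (x y : Fin 2 → ℝ) :
    (∫ u : Fin 2 → ℝ,
        (gaussDensity2 x (δ ^ 2 • !![1, ρ; ρ, 1]) u) ^ 2 /
          gaussDensity2 y (δ ^ 2 • (1 : Matrix (Fin 2) (Fin 2) ℝ)) u) - 1
      = (1 / (1 - ρ ^ 2)) *
          Real.exp (dotProduct (x - y) ((!![1, ρ; ρ, 1] : Matrix (Fin 2) (Fin 2) ℝ).mulVec (x - y))
            / ((1 - ρ ^ 2) * δ ^ 2)) - 1 := by
  obtain ⟨hρ1, hρ2⟩ := hρ
  have hr : 0 < 1 - ρ^2 := by nlinarith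
  have hs : 0 < δ^2 := by positivity
  have hπ := Real.pi_pos
  have h1ρ : (0:ℝ) < 1 + ρ^2 := by positivity
  -- the coefficients
  set cv : ℝ := (1+ρ^2)/(2*(1-ρ^2)*δ^2) with hcv_def
  set pv : ℝ := 2*ρ/((1-ρ^2)*δ^2) with hpv_def
  set qv : ℝ := (2*(x 1) - 2*ρ*(x 0))/((1-ρ^2)*δ^2) - (y 1)/δ^2 with hqv_def
  set vv : ℝ := (2*(x 0) - 2*ρ*(x 1))/((1-ρ^2)*δ^2) - (y 0)/δ^2 with hvv_def
  set wv : ℝ := -((x 0)^2 + (x 1)^2 - 2*ρ*(x 0)*(x 1))/((1-ρ^2)*δ^2)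
      + ((y 0)^2+(y 1)^2)/(2*δ^2) with hwv_def
  set Cv : ℝ := 1/(2*π*δ^2*(1-ρ^2)) with hCv_def
  have hc : 0 < cv := by
    rw [hcv_def]
    exact div_pos h1ρ (by positivity)
  have hC : 0 < Cv := by
    rw [hCv_def]
    exact div_pos one_pos (by positivity)
  have hcc : cv - pv^2/(4*cv) = (1-ρ^2)/(2*δ^2*(1+ρ^2)) := by
    rw [hcv_def, hpv_def]
    field_simp
    ring
  have hc' : 0 < cv - pv^2/(4*cv) := by
    rw [hcc]
    exact div_pos hr (by positivity)
  -- matrix computations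
  have hdetR : ((δ^2) • !![(1:ℝ), ρ; ρ, 1]).det = (δ^2)^2 * (1-ρ^2) := by
    rw [Matrix.det_smul, Matrix.det_fin_two_of, Fintype.card_fin]
    ring
  have hdetI : ((δ^2) • (1 : Matrix (Fin 2) (Fin 2) ℝ)).det = (δ^2)^2 := by
    rw [Matrix.det_smul, Matrix.det_one, Fintype.card_fin, mul_one]
  have hinvR : ((δ^2) • !![(1:ℝ), ρ; ρ, 1])⁻¹
      = ((1-ρ^2)*δ^2)⁻¹ • !![(1:ℝ), -ρ; -ρ, 1] := by
    apply Matrix.inv_eq_right_inv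
    ext i j
    fin_cases i <;> fin_cases j <;>
      simp [Matrix.mul_apply, Fin.sum_univ_two, Matrix.one_apply] <;>
      field_simp <;> ring
  have hinvI : ((δ^2) • (1 : Matrix (Fin 2) (Fin 2) ℝ))⁻¹
      = (δ^2)⁻¹ • (1 : Matrix (Fin 2) (Fin 2) ℝ) := by
    apply Matrix.inv_eq_right_inv
    ext i j
    fin_cases i <;> fin_cases j <;>
      simp [Matrix.mul_apply, Fin.sum_univ_two, Matrix.one_apply] <;>
      field_simp
  have hsqR : Real.sqrt ((δ^2)^2 * (1-ρ^2)) = δ^2 * Real.sqrt (1-ρ^2) := by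
    rw [Real.sqrt_mul (by positivity), Real.sqrt_sq hs.le]
  have hsqI : Real.sqrt ((δ^2)^2) = δ^2 := Real.sqrt_sq hs.le
  have hsr_pos : 0 < Real.sqrt (1-ρ^2) := Real.sqrt_pos.mpr hr
  -- pointwise identity for the integrand
  have hpt : ∀ u : Fin 2 → ℝ,
      (gaussDensity2 x (δ ^ 2 • !![1, ρ; ρ, 1]) u) ^ 2 /
          gaussDensity2 y (δ ^ 2 • (1 : Matrix (Fin 2) (Fin 2) ℝ)) u
        = Cv * Real.exp (-cv*(u 1)^2 + (pv*(u 0)+qv)*(u 1)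
            + (-cv*(u 0)^2 + vv*(u 0) + wv)) := by
    intro u
    rw [gaussDensity2, gaussDensity2, hdetR, hdetI, hinvR, hinvI, hsqR, hsqI,
      dot_aux, dot_aux2]
    rw [sq_div_exp_aux _ _ _ _ (by positivity)]
    set t := Real.sqrt (1-ρ^2) with ht_def
    have ht : 0 < t := hsr_pos
    have ht2 : t^2 = 1-ρ^2 := Real.sq_sqrt hr.le
    have hconst : (1/(2*π*(δ^2*t)))^2 / (1/(2*π*δ^2)) = Cv := by
      rw [hCv_def, ← ht2]
      field_simp
    rw [hconst]
    congr 1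
    simp only [Pi.sub_apply]
    rw [hcv_def, hpv_def, hqv_def, hvv_def, hwv_def]
    field_simp
    ring
  -- transport the integral to ℝ × ℝ
  have hfun : (fun u : Fin 2 → ℝ =>
      (gaussDensity2 x (δ ^ 2 • !![1, ρ; ρ, 1]) u) ^ 2 /
        gaussDensity2 y (δ ^ 2 • (1 : Matrix (Fin 2) (Fin 2) ℝ)) u)
      = fun u : Fin 2 → ℝ => Cv * Real.exp (-cv*(u 1)^2 + (pv*(u 0)+qv)*(u 1)
          + (-cv*(u 0)^2 + vv*(u 0) + wv)) := funext hpt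
  rw [hfun]
  have hswap : (∫ u : Fin 2 → ℝ, Cv * Real.exp (-cv*(u 1)^2 + (pv*(u 0)+qv)*(u 1)
        + (-cv*(u 0)^2 + vv*(u 0) + wv)))
      = ∫ z : ℝ × ℝ, Cv * Real.exp (-cv*z.2^2 + (pv*z.1+qv)*z.2
        + (-cv*z.1^2 + vv*z.1 + wv)) := by
    exact (volume_preserving_piFinTwo (fun _ => ℝ)).integral_comp
      (MeasurableEquiv.measurableEmbedding _)
      (fun z : ℝ × ℝ => Cv * Real.exp (-cv*z.2^2 + (pv*z.1+qv)*z.2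
        + (-cv*z.1^2 + vv*z.1 + wv)))
  rw [hswap, gauss2 hc hC pv qv vv wv hc']
  congr 2
  · -- the constant in front
    rw [hcc]
    have hmul : (π/cv) * (π/((1-ρ^2)/(2*δ^2*(1+ρ^2)))) = (2*π*δ^2)^2 := by
      rw [hcv_def]
      field_simp
    have hsq : Real.sqrt (π/cv) * Real.sqrt (π/((1-ρ^2)/(2*δ^2*(1+ρ^2)))) = 2*π*δ^2 := by
      rw [← Real.sqrt_mul (le_of_lt (div_pos hπ hc)), hmul,
        Real.sqrt_sq (by positivity)]
    rw [mul_assoc, hsq, hCv_def]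
    field_simp
  · -- the exponent
    rw [dot_aux3 ρ (x - y)]
    simp only [Pi.sub_apply]
    rw [hcc, hcv_def, hpv_def, hqv_def, hvv_def, hwv_def]
    congr 1
    field_simp [hr.ne', hs.ne', h1ρ.ne']
    ring
end

section
/- Let Y₁, Y₂ be i.i.d. with density p_Y, and for fixed s let the conditional density of Y₁ given S₂ = s be p_Y(z)p_Y(s−z)/p_{S₂}(s). Then for any f with ∫f(z)p_Y(z)dz = 0, defining (Cf)(s) = E[f(Y₁)|S₂=s], one has 4·E[(Cf)(S₂)²] ≤ 2·E[f(Y)²]; i.e., the second-largest eigenvalue of C*C is at most 1/2. -/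
open MeasureTheory

private lemma cs_aux {g w : ℝ → ℝ} (hw0 : ∀ x, 0 ≤ w x)
    (hwi : Integrable w) (hgw : Integrable (fun z => g z * w z))
    (hgw2 : Integrable (fun z => (g z) ^ 2 * w z)) :
    (∫ z, g z * w z) ^ 2 ≤ (∫ z, w z) * ∫ z, (g z) ^ 2 * w z := by
  set W := ∫ z, w z with hWdef
  set I := ∫ z, g z * w z with hIdef
  set J := ∫ z, (g z) ^ 2 * w z with hJdef
  have hJ0 : 0 ≤ J := integral_nonneg fun z => mul_nonneg (sq_nonneg _) (hw0 z)
  have hW0 : 0 ≤ W := integral_nonneg hw0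
  rcases eq_or_lt_of_le hW0 with h0 | hpos
  · have hwz : w =ᵐ[volume] 0 := (integral_eq_zero_iff_of_nonneg hw0 hwi).mp h0.symm
    have hI : I = 0 := by
      rw [hIdef, show (0:ℝ) = ∫ _ : ℝ, (0:ℝ) by simp]
      refine integral_congr_ae ?_
      filter_upwards [hwz] with z hz
      simp [hz]
    rw [hI]
    simpa using mul_nonneg hW0 hJ0
  · set t := I / W with htdef
    have key : (fun z => (g z - t) ^ 2 * w z)
        = fun z => ((g z) ^ 2 * w z - (2 * t) * (g z * w z)) + t ^ 2 * w z := by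
      funext z; ring
    have hia : Integrable (fun z => (g z) ^ 2 * w z - 2 * t * (g z * w z)) :=
      hgw2.sub (hgw.const_mul (2 * t))
    have hib : Integrable (fun z => t ^ 2 * w z) := hwi.const_mul (t ^ 2)
    have hic : Integrable (fun z => 2 * t * (g z * w z)) := hgw.const_mul (2 * t)
    have h0 : 0 ≤ J - 2 * t * I + t ^ 2 * W := by
      have hnn : 0 ≤ ∫ z, (g z - t) ^ 2 * w z :=
        integral_nonneg fun z => mul_nonneg (sq_nonneg _) (hw0 z)
      rw [key] at hnn
      rwa [integral_add hia hib, integral_sub hgw2 hic, integral_const_mul _ _,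
        integral_const_mul _ _, ← hIdef, ← hJdef, ← hWdef] at hnn
    have e : t * W = I := div_mul_cancel₀ I hpos.ne'
    have h3 : t ^ 2 * W = t * I := by rw [pow_two, mul_assoc, e]
    have h2 : t * I ≤ J := by nlinarith [h0, h3]
    have h4 : I ^ 2 = t * I * W := by rw [pow_two, mul_comm t I, mul_assoc, e]
    calc I ^ 2 = (t * I) * W := h4
      _ ≤ J * W := mul_le_mul_of_nonneg_right h2 hW0
      _ = W * J := mul_comm _ _

/-- Dembo–Kagan–Shepp bound for `n = 2` via conditional densities: for i.i.d.
`Y₁, Y₂` with density `p`, `S₂ = Y₁ + Y₂` with density `pS = p ⋆ p`, and `f`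
with `∫ f p = 0`, the conditional expectation `(Cf)(s) = E[f(Y₁) | S₂ = s]`
satisfies `4·E[(Cf)(S₂)²] ≤ 2·E[f(Y)²]`, i.e. the second-largest eigenvalue of
`C*C` is at most `1/2`.  Expectations are written as density integrals. -/
theorem stmt_18 (p : ℝ → ℝ) (hpm : Measurable p) (hp0 : ∀ x, 0 ≤ p x)
    (hp1 : ∫ x, p x = 1)
    (f : ℝ → ℝ) (hfm : Measurable f)
    (hf0 : ∫ z, f z * p z = 0)
    (hfL2 : Integrable (fun z => (f z) ^ 2 * p z))
    (pS : ℝ → ℝ) (hpS : ∀ s, pS s = ∫ z, p z * p (s - z))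
    (Cf : ℝ → ℝ) (hCf : ∀ s, Cf s = (∫ z, f z * p z * p (s - z)) / pS s)
    (hCfL2 : Integrable (fun s => (Cf s) ^ 2 * pS s)) :
    4 * ∫ s, (Cf s) ^ 2 * pS s ≤ 2 * ∫ y, (f y) ^ 2 * p y := by
  -- basic integrabilities
  have hpi : Integrable p := by
    by_contra h
    rw [integral_undef h] at hp1; norm_num at hp1
  have hfpi : Integrable (fun z => f z * p z) := by
    refine (hfL2.add hpi).mono' ((hfm.mul hpm).aestronglyMeasurable) ?_
    refine Filter.Eventually.of_forall fun z => ?_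
    have h1 : |f z * p z| = |f z| * p z := by
      rw [abs_mul, abs_of_nonneg (hp0 z)]
    simp only [Real.norm_eq_abs, h1, Pi.add_apply]
    nlinarith [sq_nonneg (|f z| - 1), hp0 z, sq_abs (f z), abs_nonneg (f z)]
  -- the measure-preserving shear T (z, s) ↦ (z, s - z)
  have hT : MeasurePreserving (fun zs : ℝ × ℝ => (zs.1, zs.2 - zs.1))
      ((volume : Measure ℝ).prod volume) ((volume : Measure ℝ).prod volume) :=
    measurePreserving_prod_sub volume volume
  have hTemb : MeasurableEmbedding (fun zs : ℝ × ℝ => (zs.1, zs.2 - zs.1)) := by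
    exact (MeasurableEquiv.shearSubRight ℝ).measurableEmbedding
  -- the symmetric square integrand on the product
  set G2 : ℝ × ℝ → ℝ := fun zu => (f zu.1 + f zu.2) ^ 2 * (p zu.1 * p zu.2) with hG2def
  have hG2m : Measurable G2 := by
    apply Measurable.mul
    · exact ((hfm.comp measurable_fst).add (hfm.comp measurable_snd)).pow_const 2
    · exact (hpm.comp measurable_fst).mul (hpm.comp measurable_snd)
  have i1 : Integrable (fun zu : ℝ × ℝ => ((f zu.1) ^ 2 * p zu.1) * p zu.2)
      ((volume : Measure ℝ).prod volume) := hfL2.mul_prod hpi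
  have i2 : Integrable (fun zu : ℝ × ℝ => p zu.1 * ((f zu.2) ^ 2 * p zu.2))
      ((volume : Measure ℝ).prod volume) := hpi.mul_prod hfL2
  have icross : Integrable (fun zu : ℝ × ℝ => (f zu.1 * p zu.1) * (f zu.2 * p zu.2))
      ((volume : Measure ℝ).prod volume) := hfpi.mul_prod hfpi
  have hG2i : Integrable G2 ((volume : Measure ℝ).prod volume) := by
    refine ((i1.const_mul 2).add (i2.const_mul 2)).mono' hG2m.aestronglyMeasurable ?_
    refine Filter.Eventually.of_forall fun zu => ?_
    have h1 : 0 ≤ G2 zu := mul_nonneg (sq_nonneg _) (mul_nonneg (hp0 _) (hp0 _))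
    rw [Real.norm_eq_abs, abs_of_nonneg h1]
    simp only [hG2def, Pi.add_apply]
    nlinarith [sq_nonneg (f zu.1 - f zu.2), hp0 zu.1, hp0 zu.2,
      mul_nonneg (hp0 zu.1) (hp0 zu.2), sq_nonneg (f zu.1 + f zu.2)]
  have hG2int : ∫ zu, G2 zu ∂((volume : Measure ℝ).prod volume)
      = 2 * ∫ y, (f y) ^ 2 * p y := by
    have expand : G2 = fun zu => ((f zu.1) ^ 2 * p zu.1) * p zu.2
        + (2 * ((f zu.1 * p zu.1) * (f zu.2 * p zu.2))
          + p zu.1 * ((f zu.2) ^ 2 * p zu.2)) := by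
      funext zu; simp only [hG2def]; ring
    have ic2 : Integrable (fun zu : ℝ × ℝ => 2 * ((f zu.1 * p zu.1) * (f zu.2 * p zu.2)))
        ((volume : Measure ℝ).prod volume) := icross.const_mul 2
    have icc : Integrable (fun zu : ℝ × ℝ => 2 * ((f zu.1 * p zu.1) * (f zu.2 * p zu.2))
        + p zu.1 * ((f zu.2) ^ 2 * p zu.2)) ((volume : Measure ℝ).prod volume) := ic2.add i2
    have e1 : ∫ zu : ℝ × ℝ, ((f zu.1) ^ 2 * p zu.1) * p zu.2 ∂((volume : Measure ℝ).prod volume)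
        = (∫ x, (f x) ^ 2 * p x) * ∫ x, p x := integral_prod_mul (fun x => (f x) ^ 2 * p x) p
    have e2 : ∫ zu : ℝ × ℝ, (f zu.1 * p zu.1) * (f zu.2 * p zu.2) ∂((volume : Measure ℝ).prod volume)
        = (∫ x, f x * p x) * ∫ x, f x * p x := integral_prod_mul (fun x => f x * p x) (fun x => f x * p x)
    have e3 : ∫ zu : ℝ × ℝ, p zu.1 * ((f zu.2) ^ 2 * p zu.2) ∂((volume : Measure ℝ).prod volume)
        = (∫ x, p x) * ∫ x, (f x) ^ 2 * p x := integral_prod_mul p (fun x => (f x) ^ 2 * p x)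
    rw [expand, integral_add i1 icc, integral_add ic2 i2, integral_const_mul,
      e1, e2, e3, hp1, hf0]
    ring
  -- transfer along T
  set H : ℝ × ℝ → ℝ := fun zs => (f zs.1 + f (zs.2 - zs.1)) ^ 2
      * (p zs.1 * p (zs.2 - zs.1)) with hHdef
  have hHT : H = G2 ∘ (fun zs : ℝ × ℝ => (zs.1, zs.2 - zs.1)) := rfl
  have hHi : Integrable H ((volume : Measure ℝ).prod volume) := by
    rw [hHT]
    exact (hT.integrable_comp hG2i.aestronglyMeasurable).mpr hG2i
  have hHint : ∫ zs, H zs ∂((volume : Measure ℝ).prod volume)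
      = 2 * ∫ y, (f y) ^ 2 * p y := by
    have h := hT.integral_comp hTemb G2
    calc ∫ zs, H zs ∂((volume : Measure ℝ).prod volume)
        = ∫ zu, G2 zu ∂((volume : Measure ℝ).prod volume) := h
      _ = 2 * ∫ y, (f y) ^ 2 * p y := hG2int
  -- similarly for the weight and for f² against the weight
  set P : ℝ × ℝ → ℝ := fun zs => p zs.1 * p (zs.2 - zs.1) with hPdef
  have hPi : Integrable P ((volume : Measure ℝ).prod volume) := by
    have : P = (fun zu : ℝ × ℝ => p zu.1 * p zu.2) ∘ (fun zs : ℝ × ℝ => (zs.1, zs.2 - zs.1)) := rfl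
    rw [this]
    exact (hT.integrable_comp (hpi.mul_prod hpi).aestronglyMeasurable).mpr (hpi.mul_prod hpi)
  set Q : ℝ × ℝ → ℝ := fun zs => (f zs.1) ^ 2 * (p zs.1 * p (zs.2 - zs.1)) with hQdef
  have hQi : Integrable Q ((volume : Measure ℝ).prod volume) := by
    have e1 : Integrable (fun zu : ℝ × ℝ => (f zu.1) ^ 2 * (p zu.1 * p zu.2))
        ((volume : Measure ℝ).prod volume) := by
      have : (fun zu : ℝ × ℝ => (f zu.1) ^ 2 * (p zu.1 * p zu.2))
          = fun zu : ℝ × ℝ => ((f zu.1) ^ 2 * p zu.1) * p zu.2 := by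
        funext zu; ring
      rw [this]; exact i1
    have : Q = (fun zu : ℝ × ℝ => (f zu.1) ^ 2 * (p zu.1 * p zu.2))
        ∘ (fun zs : ℝ × ℝ => (zs.1, zs.2 - zs.1)) := rfl
    rw [this]
    exact (hT.integrable_comp e1.aestronglyMeasurable).mpr e1
  -- a.e. section facts
  have haeH : ∀ᵐ s : ℝ, Integrable (fun z => H (z, s)) := hHi.prod_left_ae
  have haeP : ∀ᵐ s : ℝ, Integrable (fun z => P (z, s)) := hPi.prod_left_ae
  have haeQ : ∀ᵐ s : ℝ, Integrable (fun z => Q (z, s)) := hQi.prod_left_ae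
  -- the pointwise (in s) key inequality
  have key : ∀ᵐ s : ℝ, 4 * ((Cf s) ^ 2 * pS s) ≤ ∫ z, H (z, s) := by
    filter_upwards [haeH, haeP, haeQ] with s hHs hPs hQs
    have hBnn : 0 ≤ ∫ z, H (z, s) :=
      integral_nonneg fun z => mul_nonneg (sq_nonneg _) (mul_nonneg (hp0 _) (hp0 _))
    have hpS0 : 0 ≤ pS s := by
      rw [hpS s]; exact integral_nonneg fun z => mul_nonneg (hp0 _) (hp0 _)
    rcases eq_or_lt_of_le hpS0 with hz | hpos
    · rw [hCf s, ← hz, mul_zero, mul_zero]; exact hBnn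
    · -- weight and integrands for Cauchy–Schwarz
      have hfw : Integrable (fun z => f z * (p z * p (s - z))) := by
        refine (hQs.add hPs).mono'
          ((hfm.mul (hpm.mul (hpm.comp (measurable_const.sub measurable_id)))).aestronglyMeasurable) ?_
        refine Filter.Eventually.of_forall fun z => ?_
        have hw0 : 0 ≤ p z * p (s - z) := mul_nonneg (hp0 _) (hp0 _)
        have h1 : |f z * (p z * p (s - z))| = |f z| * (p z * p (s - z)) := by
          rw [abs_mul, abs_of_nonneg hw0]
        simp only [Real.norm_eq_abs, h1, hQdef, hPdef, Pi.add_apply]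
        nlinarith [sq_nonneg (|f z| - 1), hw0, sq_abs (f z), abs_nonneg (f z)]
      have hfw2 : Integrable (fun z => f (s - z) * (p z * p (s - z))) := by
        have : (fun z => f (s - z) * (p z * p (s - z)))
            = fun z => (fun u => f u * (p (s - u) * p u)) (s - z) := by
          funext z; simp [sub_sub_cancel]
        rw [this, integrable_comp_sub_left (fun u => f u * (p (s - u) * p u)) s]
        refine (hQs.add hPs).mono'
          ((hfm.mul ((hpm.comp (measurable_const.sub measurable_id)).mul hpm)).aestronglyMeasurable) ?_
        refine Filter.Eventually.of_forall fun z => ?_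
        have hw0 : 0 ≤ p (s - z) * p z := mul_nonneg (hp0 _) (hp0 _)
        have h1 : |f z * (p (s - z) * p z)| = |f z| * (p (s - z) * p z) := by
          rw [abs_mul, abs_of_nonneg hw0]
        simp only [Real.norm_eq_abs, h1, hQdef, hPdef, Pi.add_apply]
        nlinarith [sq_nonneg (|f z| - 1), hw0, sq_abs (f z), abs_nonneg (f z)]
      -- Cauchy–Schwarz with g = f + f(s - ·), w = p · p(s - ·)
      have hgw : Integrable (fun z => (f z + f (s - z)) * (p z * p (s - z))) := by
        have : (fun z => (f z + f (s - z)) * (p z * p (s - z)))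
            = fun z => f z * (p z * p (s - z)) + f (s - z) * (p z * p (s - z)) := by
          funext z; ring
        rw [this]; exact hfw.add hfw2
      have hgw2 : Integrable (fun z => (f z + f (s - z)) ^ 2 * (p z * p (s - z))) := hHs
      have hcs := cs_aux (g := fun z => f z + f (s - z)) (w := fun z => p z * p (s - z))
        (fun z => mul_nonneg (hp0 _) (hp0 _)) hPs hgw hgw2
      -- identify the first moment with 2A
      set A := ∫ z, f z * p z * p (s - z) with hAdef
      have hA1 : ∫ z, f z * (p z * p (s - z)) = A := by
        rw [hAdef]; congr 1; funext z; ring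
      have hA2 : ∫ z, f (s - z) * (p z * p (s - z)) = A := by
        have e : (fun z => f (s - z) * (p z * p (s - z)))
            = fun z => (fun u => f u * (p (s - u) * p u)) (s - z) := by
          funext z; simp [sub_sub_cancel]
        rw [e, integral_sub_left_eq_self (fun u => f u * (p (s - u) * p u)) volume s, hAdef]
        congr 1; funext u; ring
      have hsum : ∫ z, (f z + f (s - z)) * (p z * p (s - z)) = 2 * A := by
        have e : (fun z => (f z + f (s - z)) * (p z * p (s - z)))
            = fun z => f z * (p z * p (s - z)) + f (s - z) * (p z * p (s - z)) := by
          funext z; ring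
        rw [e, integral_add hfw hfw2, hA1, hA2]; ring
      rw [hsum, ← hpS s] at hcs
      have hcs' : (2 * A) ^ 2 ≤ pS s * ∫ z, H (z, s) := by exact hcs
      -- conclude
      rw [hCf s, ← hAdef]
      have heq : 4 * ((A / pS s) ^ 2 * pS s) = 4 * A ^ 2 / pS s := by
        field_simp
      rw [heq, div_le_iff₀ hpos]
      nlinarith [hcs']
  -- integrate the key inequality
  have hBi : Integrable (fun s => ∫ z, H (z, s)) := hHi.integral_prod_right
  have hmono : ∫ s, 4 * ((Cf s) ^ 2 * pS s) ≤ ∫ s, ∫ z, H (z, s) :=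
    integral_mono_ae (hCfL2.const_mul 4) hBi key
  have hleft : ∫ s, 4 * ((Cf s) ^ 2 * pS s) = 4 * ∫ s, (Cf s) ^ 2 * pS s :=
    integral_const_mul 4 _
  have hright : ∫ s, ∫ z, H (z, s) = 2 * ∫ y, (f y) ^ 2 * p y := by
    have hsw : ∫ z, ∫ s, H (z, s) = ∫ s, ∫ z, H (z, s) :=
      integral_integral_swap (f := fun z s => H (z, s)) hHi
    have hii : ∫ z, ∫ s, H (z, s) = ∫ zs, H zs ∂((volume : Measure ℝ).prod volume) :=
      integral_integral (f := fun z s => H (z, s)) hHi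
    rw [← hsw, hii, hHint]
  calc 4 * ∫ s, (Cf s) ^ 2 * pS s = ∫ s, 4 * ((Cf s) ^ 2 * pS s) := hleft.symm
    _ ≤ ∫ s, ∫ z, H (z, s) := hmono
    _ = 2 * ∫ y, (f y) ^ 2 * p y := hright
end
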